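/- Let A, μ : ℕ → ℝ be sequences with A(t) ≥ 0 and μ(t) ≥ 0 for all t, and suppose there is a constant A_max with A(t) ≤ A_max for all t. Let Q̃ be defined by Q̃(0) = 0 and Q̃(t+1) = max(Q̃(t) + A(t) − μ(t), 0), and let Q̂ be defined by Q̂(0) = 0 and Q̂(t+1) = max(Q̂(t) − μ(t), 0) + A(t). Then Q̂(t) ≤ Q̃(t) + A_max for all t ≥ 0. (Inequality (*) of Proposition 1 in the proof of Lemma 1.) -/
import Mathlib

/-- Inequality (*) of Proposition 1 in the proof of Lemma 1: with arrivals
uniformly bounded by `Amax`, the associated recursion `Q̂` exceeds the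
Lindley recursion `Q̃` by at most `Amax`. -/
theorem assoc_le_lindley_add_Amax
    (A μ Qt Qh : ℕ → ℝ) (Amax : ℝ)
    (hA : ∀ t, 0 ≤ A t) (hμ : ∀ t, 0 ≤ μ t)
    (hAmax : ∀ t, A t ≤ Amax)
    (hQt0 : Qt 0 = 0)
    (hQt : ∀ t, Qt (t + 1) = max (Qt t + A t - μ t) 0)
    (hQh0 : Qh 0 = 0)
    (hQh : ∀ t, Qh (t + 1) = max (Qh t - μ t) 0 + A t) :
    ∀ t, Qh t ≤ Qt t + Amax := by
  have h0 : (0:ℝ) ≤ Amax := le_trans (hA 0) (hAmax 0)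
  intro t
  induction t with
  | zero => simp [hQh0, hQt0, h0]
  | succ t ih =>
    rw [hQh t, hQt t]
    rcases le_or_gt (Qt t + Amax - μ t) 0 with h | h
    · have : max (Qh t - μ t) 0 ≤ 0 := by
        apply max_le _ le_rfl
        linarith
      have := hAmax t
      have := le_max_right (Qt t + A t - μ t) 0
      linarith
    · have h1 : max (Qh t - μ t) 0 ≤ Qt t + Amax - μ t := by
        apply max_le (by linarith) h.le
      have := le_max_left (Qt t + A t - μ t) 0
      linarith
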